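/- Let A be a finite alphabet, φ: A* → A* a marked morphism in Class P_ret, and u ∈ A^ℕ an infinite word whose language L(u) is closed under reversal. If the infinite word φ(u) is rich, then u is rich. -/

import Mathlib

open List

/-- Apply a morphism (given by its values on letters) to a finite word. -/
def applyM {A : Type*} (φ : A → List A) (v : List A) : List A := v.flatMap φ

/-- The set of occurrences of `w` as a factor of `u`:
indices `i` such that the block of `u` of length `|w|` starting at `i` equals `w`. -/
def occs {A : Type*} [DecidableEq A] (w u : List A) : Finset ℕ :=
  (Finset.range (u.length + 1)).filter
    (fun i => i + w.length ≤ u.length ∧ (u.drop i).take w.length = w)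

/-- A morphism `φ` belongs to Class `P_ret` with marker `w` if it is injective on
letters, `w` is a palindrome, and for each letter `a` the word `φ(a)w` is a palindrome
in which `w` occurs exactly twice, namely as a prefix (position `0`) and as a suffix
(position `|φ(a)|`, distinct from `0`). -/
def IsPretWithMarker {A : Type*} [DecidableEq A] (φ : A → List A) (w : List A) : Prop :=
  Function.Injective φ ∧ w.reverse = w ∧
    ∀ a : A, (φ a ++ w).reverse = φ a ++ w ∧
      occs w (φ a ++ w) = {0, (φ a).length} ∧ (φ a).length ≠ 0

/-- The block of length `len` of the infinite word `u` starting at position `i`. -/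
def factorAt {A : Type*} (u : ℕ → A) (i len : ℕ) : List A :=
  (List.range len).map fun k => u (i + k)

/-- `i` is an occurrence of the finite word `v` in the infinite word `u`. -/
def OccursAt {A : Type*} (u : ℕ → A) (v : List A) (i : ℕ) : Prop :=
  factorAt u i v.length = v

/-- `v` belongs to the language of the infinite word `u`, i.e. `v` is a factor of `u`. -/
def InLang {A : Type*} (u : ℕ → A) (v : List A) : Prop := ∃ i, OccursAt u v i

/-- The image `φ(u) = φ(u₀)φ(u₁)φ(u₂)⋯` of an infinite word `u` under a
(non-erasing) morphism `φ`, as an infinite word. -/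
def applyInf {A : Type*} (φ : A → List A) (u : ℕ → A) (n : ℕ) : A :=
  (((List.range (n + 1)).flatMap fun i => φ (u i))).getD n (u 0)

/-- The language of `u` is closed under reversal. -/
def ClosedUnderReversal {A : Type*} (u : ℕ → A) : Prop :=
  ∀ v : List A, InLang u v → InLang u v.reverse

/-- A finite word is rich if its number of palindromic factors (including `ε`)
equals its length plus one. -/
def RichWord {A : Type*} (u : List A) : Prop :=
  {p : List A | p <:+: u ∧ p.reverse = p}.ncard = u.length + 1

/-- An infinite word is rich if all its finite prefixes are rich. -/
def RichInf {A : Type*} (u : ℕ → A) : Prop := ∀ n : ℕ, RichWord (factorAt u 0 n)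

/-- An infinite word is recurrent if each of its factors occurs infinitely often. -/
def Recurrent {A : Type*} (u : ℕ → A) : Prop :=
  ∀ v : List A, InLang u v → ∀ N : ℕ, ∃ i, N ≤ i ∧ OccursAt u v i

/-- `r` is a return word to `w` in the infinite word `u`: `wr ∈ L(u)` and `w`
occurs in `wr` exactly twice, as a prefix and as a suffix. -/
def IsReturnWord {A : Type*} [DecidableEq A] (u : ℕ → A) (w r : List A) : Prop :=
  r ≠ [] ∧ InLang u (w ++ r) ∧ occs w (w ++ r) = {0, r.length}

/-- Left extensions of `x` in the language of `u`. -/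
def leftExt {A : Type*} (u : ℕ → A) (x : List A) : Set A := {a | InLang u (a :: x)}

/-- Right extensions of `x` in the language of `u`. -/
def rightExt {A : Type*} (u : ℕ → A) (x : List A) : Set A := {b | InLang u (x ++ [b])}

/-- Bi-extensions of `x` in the language of `u`. -/
def biExt {A : Type*} (u : ℕ → A) (x : List A) : Set (A × A) :=
  {p | InLang u (p.1 :: (x ++ [p.2]))}

/-- `x` is bispecial in `u`. -/
def Bispecial {A : Type*} (u : ℕ → A) (x : List A) : Prop :=
  2 ≤ (leftExt u x).ncard ∧ 2 ≤ (rightExt u x).ncard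

/-- The bilateral order `b_u(x) = #B_u(x) − #L_u(x) − #R_u(x) + 1`. -/
noncomputable def bilateralOrder {A : Type*} (u : ℕ → A) (x : List A) : ℤ :=
  ((biExt u x).ncard : ℤ) - (leftExt u x).ncard - (rightExt u x).ncard + 1

/-- The number of palindromic extensions of `x` in `u`. -/
noncomputable def pext {A : Type*} (u : ℕ → A) (x : List A) : ℕ :=
  {a | InLang u (a :: (x ++ [a]))}.ncard

/-- Arnoux-Rauzy morphisms: the monoid of morphisms generated by permutations of the
alphabet and by the elementary morphisms `ψ_a : a ↦ a, b ↦ ab` and `ψ̄_a : a ↦ a, b ↦ ba`. -/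
inductive IsAR {A : Type*} [DecidableEq A] : (A → List A) → Prop
  | perm (π : Equiv.Perm A) : IsAR (fun a => [π a])
  | psiL (a : A) : IsAR (fun b => if b = a then [a] else [a, b])
  | psiR (a : A) : IsAR (fun b => if b = a then [a] else [b, a])
  | comp {φ ψ : A → List A} : IsAR φ → IsAR ψ → IsAR (fun a => applyM φ (ψ a))

/-- The `k`-th power `φ^k` of a morphism. -/
def powM {A : Type*} (φ : A → List A) : ℕ → A → List A
  | 0, a => [a]
  | n + 1, a => applyM (powM φ n) (φ a)

/-- A morphism is primitive if some power of it maps every letter to a word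
containing every letter. -/
def PrimitiveM {A : Type*} (φ : A → List A) : Prop :=
  ∃ k : ℕ, ∀ a b : A, b ∈ powM φ k a

/-- A (acyclic) morphism is marked: it has a rightmost conjugate `φR` whose
last-letter map is injective, and a leftmost conjugate `φL` whose first-letter map
is injective. -/
def Marked {A : Type*} (φ : A → List A) : Prop :=
  ∃ (φR φL : A → List A) (x y : List A),
    (∀ a, φ a ++ x = x ++ φR a) ∧
    (∀ a, φL a ++ y = y ++ φ a) ∧
    (∃ a b : A, (φR a).getLast? ≠ (φR b).getLast?) ∧
    (∃ a b : A, (φL a).head? ≠ (φL b).head?) ∧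
    Function.Injective (fun c => (φR c).getLast?) ∧
    Function.Injective (fun c => (φL c).head?)

/-!
An infinite word is rich iff the longest palindromic suffix of each prefix is unioccurrent in
that prefix. Let `s` be the longest palindromic suffix of `q = u₀⋯uₙ`. Because each `φ(a)w` is
a palindrome containing the marker `w` only as a prefix and as a suffix, `φ(q)w` is a prefix
of `φ(u)`, occurrences of `w` in `φ(q)w` lie only at images of cuts of `q`, and hence the
longest palindromic suffix of `φ(q)w` is `φ(s)w`. An earlier occurrence of `s` in `q` would
give an earlier occurrence of `φ(s)w` in `φ(q)w`, against the richness of `φ(u)`.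
-/

section Palindromes

variable {A : Type*}

def palFactors (v : List A) : Set (List A) := {p | p <:+: v ∧ p.reverse = p}

structure IsLongestPalSuffix (s v : List A) : Prop where
  suffix : s <:+ v
  reverse_eq : s.reverse = s
  length_le : ∀ p, p <:+ v → p.reverse = p → p.length ≤ s.length

lemma palFactors_finite (v : List A) : (palFactors v).Finite :=
  v.sublists.finite_toSet.subset fun _ hp => mem_sublists.2 hp.1.sublist

lemma palFactors_nil : palFactors ([] : List A) = {[]} := by
  ext p
  simp only [palFactors, Set.mem_ofPred_eq, Set.mem_singleton_iff, infix_nil]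
  exact ⟨And.left, fun hp => ⟨hp, hp ▸ rfl⟩⟩

lemma exists_isLongestPalSuffix (v : List A) : ∃ s, IsLongestPalSuffix s v := by
  classical
  let cands := v.tails.toFinset.filter fun p => p.reverse = p
  have mem_cands {p : List A} : p ∈ cands ↔ p <:+ v ∧ p.reverse = p := by
    simp [cands]
  obtain ⟨s, hs, hmax⟩ :=
    cands.exists_max_image length ⟨[], mem_cands.2 ⟨nil_suffix, rfl⟩⟩
  exact ⟨s, (mem_cands.1 hs).1, (mem_cands.1 hs).2,
    fun p hp hpal => hmax p (mem_cands.2 ⟨hp, hpal⟩)⟩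

/-- A palindromic suffix shorter than the longest one `s` is also a prefix of `s`, so it
already occurs before the last letter. -/
lemma IsLongestPalSuffix.palFactors_concat {s v : List A} {a : A}
    (hs : IsLongestPalSuffix s (v ++ [a])) :
    palFactors (v ++ [a]) = insert s (palFactors v) := by
  ext p
  simp only [palFactors, Set.mem_insert_iff, Set.mem_ofPred_eq]
  constructor
  · rintro ⟨hinf, hpal⟩
    rcases infix_concat_iff.1 hinf with hsuf | hv
    · rcases (hs.length_le p hsuf hpal).lt_or_eq with hlt | heq
      · have hps : p <:+ s := suffix_of_suffix_length_le hsuf hs.suffix hlt.le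
        obtain ⟨r, hr⟩ : p <+: s := by
          simpa only [hpal, hs.reverse_eq] using hps.reverse
        have hr0 : r ≠ [] := by
          rintro rfl
          simp only [append_nil] at hr
          exact hlt.ne (congrArg length hr)
        obtain ⟨x, hx⟩ := hs.suffix
        refine Or.inr ⟨⟨x, r.dropLast, ?_⟩, hpal⟩
        have := congrArg dropLast hx
        rwa [← hr, ← append_assoc, dropLast_append_of_ne_nil hr0, dropLast_concat] at this
      · exact Or.inl (suffix_of_suffix_length_le hsuf hs.suffix heq.le |>.eq_of_length heq)
    · exact Or.inr ⟨hv, hpal⟩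
  · rintro (rfl | ⟨hv, hpal⟩)
    · exact ⟨hs.suffix.isInfix, hs.reverse_eq⟩
    · exact ⟨hv.trans (prefix_append v [a]).isInfix, hpal⟩

lemma IsLongestPalSuffix.richWord_concat_iff {s v : List A} {a : A} (hv : RichWord v)
    (hs : IsLongestPalSuffix s (v ++ [a])) : RichWord (v ++ [a]) ↔ ¬ s <:+: v := by
  have hv' : (palFactors v).ncard = v.length + 1 := hv
  change (palFactors (v ++ [a])).ncard = _ ↔ _
  rw [hs.palFactors_concat, length_append, length_singleton]
  by_cases hsv : s <:+: v
  · have hmem : s ∈ palFactors v := ⟨hsv, hs.reverse_eq⟩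
    simp [Set.insert_eq_of_mem hmem, hv', hsv]
  · rw [Set.ncard_insert_of_notMem (fun h => hsv h.1) (palFactors_finite v), hv']
    simp [hsv]

end Palindromes

section InfiniteWords

variable {A : Type*}

@[simp] lemma factorAt_length (x : ℕ → A) (i n : ℕ) : (factorAt x i n).length = n := by
  simp [factorAt]

lemma factorAt_succ (x : ℕ → A) (n : ℕ) : factorAt x 0 (n + 1) = factorAt x 0 n ++ [x n] := by
  simp [factorAt, range_succ]

lemma factorAt_add (x : ℕ → A) (m n : ℕ) :
    factorAt x 0 (m + n) = factorAt x 0 m ++ factorAt x m n := by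
  simp [factorAt, range_add, Function.comp_def]

lemma richInf_iff_not_infix_longestPalSuffix {x : ℕ → A} :
    RichInf x ↔ ∀ n s, IsLongestPalSuffix s (factorAt x 0 (n + 1)) → ¬ s <:+: factorAt x 0 n := by
  refine ⟨fun hx n s hs => ?_, fun hx n => ?_⟩
  · rw [factorAt_succ] at hs
    exact (hs.richWord_concat_iff (hx n)).1 (factorAt_succ x n ▸ hx (n + 1))
  · induction n with
    | zero =>
      change (palFactors _).ncard = _
      simp [factorAt, palFactors_nil]
    | succ n ih =>
      obtain ⟨s, hs⟩ := exists_isLongestPalSuffix (factorAt x 0 (n + 1))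
      have hnew := hx n s hs
      rw [factorAt_succ] at hs ⊢
      exact (hs.richWord_concat_iff ih).2 hnew

end InfiniteWords

section Morphisms

variable {A : Type*} (φ : A → List A)

@[simp] lemma applyM_nil : applyM φ [] = [] := rfl

@[simp] lemma applyM_cons (c : A) (t : List A) : applyM φ (c :: t) = φ c ++ applyM φ t := by
  simp [applyM]

@[simp] lemma applyM_append (s t : List A) : applyM φ (s ++ t) = applyM φ s ++ applyM φ t := by
  simp [applyM]

lemma length_le_length_applyM (hφ : ∀ a, φ a ≠ []) (t : List A) :
    t.length ≤ (applyM φ t).length := by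
  induction t with
  | nil => simp
  | cons c t ih =>
    have := length_pos_iff.2 (hφ c)
    simp only [applyM_cons, length_cons, length_append]
    omega

variable {φ} {w : List A}

/-- The palindromes `φ(a)w = w φ(a)ᴿ` let the marker `w` be moved across the image of a word. -/
lemma applyM_append_marker (hw : w.reverse = w)
    (hφw : ∀ a, (φ a ++ w).reverse = φ a ++ w) (t : List A) :
    applyM φ t ++ w = w ++ (applyM φ t.reverse).reverse := by
  induction t with
  | nil => simp
  | cons c t ih =>
    have hc : φ c ++ w = w ++ (φ c).reverse := by rw [← hφw c, reverse_append, hw]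
    rw [applyM_cons, append_assoc, ih, ← append_assoc, hc]
    simp

lemma reverse_applyM_append_marker (hw : w.reverse = w)
    (hφw : ∀ a, (φ a ++ w).reverse = φ a ++ w) (t : List A) :
    (applyM φ t ++ w).reverse = applyM φ t.reverse ++ w := by
  rw [applyM_append_marker hw hφw, reverse_append, reverse_reverse, hw]

end Morphisms

namespace IsPretWithMarker

variable {A : Type*} [DecidableEq A] {φ : A → List A} {w : List A}

lemma ne_nil (h : IsPretWithMarker φ w) (a : A) : φ a ≠ [] :=
  ne_nil_of_length_pos (Nat.pos_of_ne_zero (h.2.2 a).2.2)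

lemma applyM_append_eq (h : IsPretWithMarker φ w) (t : List A) :
    applyM φ t ++ w = w ++ (applyM φ t.reverse).reverse :=
  applyM_append_marker h.2.1 (fun a => (h.2.2 a).1) t

lemma reverse_applyM_append (h : IsPretWithMarker φ w) (t : List A) :
    (applyM φ t ++ w).reverse = applyM φ t.reverse ++ w :=
  reverse_applyM_append_marker h.2.1 (fun a => (h.2.2 a).1) t

lemma prefix_applyM_append (h : IsPretWithMarker φ w) (t : List A) : w <+: applyM φ t ++ w := by
  rw [h.applyM_append_eq]
  exact prefix_append _ _

lemma eq_zero_or_eq_length_of_prefix_drop (h : IsPretWithMarker φ w) {a : A} {L : List A} {i : ℕ}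
    (hL : φ a ++ w <+: L) (hi : i ≤ (φ a).length) (hwi : w <+: L.drop i) :
    i = 0 ∨ i = (φ a).length := by
  obtain ⟨r, rfl⟩ := hL
  have hdrop : (φ a ++ w).drop i <+: (φ a ++ w ++ r).drop i := by
    rw [append_assoc, drop_append_of_le_length hi, drop_append_of_le_length hi]
    exact prefix_append_right_inj _ |>.2 (prefix_append _ _)
  have hocc : i ∈ occs w (φ a ++ w) := by
    have hwi' : w <+: (φ a ++ w).drop i :=
      prefix_of_prefix_length_le hwi hdrop (by simp; omega)
    simp only [occs, Finset.mem_filter, Finset.mem_range, length_append]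
    exact ⟨by omega, by omega, (prefix_iff_eq_take.1 hwi').symm⟩
  simpa [(h.2.2 a).2.1] using hocc

lemma exists_eq_append_of_prefix_drop (h : IsPretWithMarker φ w) {t : List A} {i : ℕ}
    (hi : i ≤ (applyM φ t).length) (hwi : w <+: (applyM φ t ++ w).drop i) :
    ∃ t₁ t₂, t = t₁ ++ t₂ ∧ i = (applyM φ t₁).length := by
  induction t generalizing i with
  | nil => exact ⟨[], [], rfl, by simpa using hi⟩
  | cons c t ih =>
    rw [applyM_cons, append_assoc] at hwi
    rcases le_or_gt (φ c).length i with hci | hci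
    · obtain ⟨j, rfl⟩ := Nat.exists_eq_add_of_le hci
      rw [drop_append, drop_eq_nil_of_le (by omega), nil_append, Nat.add_sub_cancel_left] at hwi
      obtain ⟨t₁, t₂, rfl, rfl⟩ := ih (by simp at hi; omega) hwi
      exact ⟨c :: t₁, t₂, rfl, by simp⟩
    · have hL := (prefix_append_right_inj (φ c)).2 (h.prefix_applyM_append t)
      rcases h.eq_zero_or_eq_length_of_prefix_drop hL hci.le hwi with rfl | rfl
      · exact ⟨[], c :: t, rfl, rfl⟩
      · exact absurd hci (lt_irrefl _)

lemma letter_eq_of_applyM_append_eq (h : IsPretWithMarker φ w) {c c' : A} {t t' : List A}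
    (hlen : (φ c).length ≤ (φ c').length)
    (heq : φ c ++ (applyM φ t ++ w) = φ c' ++ (applyM φ t' ++ w)) : c = c' := by
  have hL := (prefix_append_right_inj (φ c')).2 (h.prefix_applyM_append t')
  have hwi : w <+: (φ c' ++ (applyM φ t' ++ w)).drop (φ c).length := by
    rw [← heq, drop_left]
    exact h.prefix_applyM_append t
  rcases h.eq_zero_or_eq_length_of_prefix_drop hL hlen hwi with h0 | hlen'
  · exact absurd (length_eq_zero_iff.1 h0) (h.ne_nil c)
  · exact h.1 (append_inj heq hlen').1

lemma applyM_injective (h : IsPretWithMarker φ w) : Function.Injective (applyM φ) := by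
  intro t
  induction t with
  | nil =>
    rintro (_ | ⟨c', t'⟩) heq
    · rfl
    · simp [eq_comm, h.ne_nil c'] at heq
  | cons c t ih =>
    rintro (_ | ⟨c', t'⟩) heq
    · simp [h.ne_nil c] at heq
    · have heqw : φ c ++ (applyM φ t ++ w) = φ c' ++ (applyM φ t' ++ w) := by
        simpa only [applyM_cons, append_assoc] using congrArg (· ++ w) heq
      obtain rfl : c = c' := (le_total (φ c).length (φ c').length).elim
        (h.letter_eq_of_applyM_append_eq · heqw)
        (fun hle => (h.letter_eq_of_applyM_append_eq hle heqw.symm).symm)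
      rw [applyM_cons, applyM_cons, append_cancel_left_eq] at heq
      rw [ih heq]

end IsPretWithMarker

section ImageOfInfiniteWord

variable {A : Type*} {φ : A → List A}

lemma applyM_factorAt_prefix (u : ℕ → A) {k l : ℕ} (hkl : k ≤ l) :
    applyM φ (factorAt u 0 k) <+: applyM φ (factorAt u 0 l) := by
  obtain ⟨d, rfl⟩ := Nat.exists_eq_add_of_le hkl
  rw [factorAt_add, applyM_append]
  exact prefix_append _ _

lemma applyInf_eq_getElem (hφ : ∀ a, φ a ≠ []) (u : ℕ → A) {k n : ℕ}
    (hn : n < (applyM φ (factorAt u 0 k)).length) :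
    applyInf φ u n = (applyM φ (factorAt u 0 k))[n] := by
  have hn' : n < (applyM φ (factorAt u 0 (n + 1))).length :=
    Nat.lt_of_succ_le (by simpa using length_le_length_applyM φ hφ (factorAt u 0 (n + 1)))
  have happly : applyInf φ u n = (applyM φ (factorAt u 0 (n + 1)))[n] := by
    rw [← getD_eq_getElem _ (u 0) hn']
    simp [applyInf, applyM, factorAt, flatMap_map]
  rw [happly, (applyM_factorAt_prefix u (le_max_left (n + 1) k)).getElem hn',
    (applyM_factorAt_prefix u (le_max_right (n + 1) k)).getElem hn]

lemma factorAt_applyInf_of_prefix (hφ : ∀ a, φ a ≠ []) (u : ℕ → A) {k : ℕ} {P : List A}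
    (hP : P <+: applyM φ (factorAt u 0 k)) : factorAt (applyInf φ u) 0 P.length = P := by
  refine ext_getElem (factorAt_length _ _ _) fun n hn hnP => ?_
  simp only [factorAt, getElem_map, getElem_range, zero_add]
  rw [applyInf_eq_getElem hφ u (hnP.trans_le hP.length_le), hP.getElem hnP]

lemma IsPretWithMarker.factorAt_applyInf [DecidableEq A] {w : List A}
    (h : IsPretWithMarker φ w) (u : ℕ → A) (k : ℕ) :
    factorAt (applyInf φ u) 0 (applyM φ (factorAt u 0 k) ++ w).length =
      applyM φ (factorAt u 0 k) ++ w := by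
  refine factorAt_applyInf_of_prefix h.ne_nil u (k := k + w.length) ?_
  rw [factorAt_add, applyM_append, prefix_append_right_inj]
  have hlen : w.length ≤ (applyM φ (factorAt u k w.length)).length :=
    by simpa using length_le_length_applyM φ h.ne_nil (factorAt u k w.length)
  exact prefix_of_prefix_length_le (h.prefix_applyM_append _) (prefix_append _ _) hlen

end ImageOfInfiniteWord

section MarkedImages

variable {A : Type*} [DecidableEq A] {φ : A → List A} {w : List A}

/-- A palindromic suffix of `φ(q)w` longer than `w` begins with `w`, hence at a cut of `q`. -/
lemma IsPretWithMarker.isLongestPalSuffix_applyM_append (h : IsPretWithMarker φ w)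
    {s q : List A} (hs : IsLongestPalSuffix s q) :
    IsLongestPalSuffix (applyM φ s ++ w) (applyM φ q ++ w) where
  suffix := by
    obtain ⟨z, rfl⟩ := hs.suffix
    exact ⟨applyM φ z, by simp⟩
  reverse_eq := by rw [h.reverse_applyM_append, hs.reverse_eq]
  length_le p hp hpal := by
    rcases le_total p.length w.length with hpw | hwp
    · simp only [length_append]
      omega
    have hwp' : w <+: p := by
      simpa [h.2.1, hpal] using (suffix_of_suffix_length_le (suffix_append _ _) hp hwp).reverse
    have hpdrop := suffix_iff_eq_drop.1 hp
    obtain ⟨t₁, t₂, rfl, hi⟩ :=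
      h.exists_eq_append_of_prefix_drop (by simp only [length_append]; omega) (hpdrop ▸ hwp')
    have hpt : p = applyM φ t₂ ++ w := by
      rw [hpdrop, hi, applyM_append, append_assoc, drop_left]
    rw [hpt, h.reverse_applyM_append] at hpal
    have ht₂ : t₂.reverse = t₂ := h.applyM_injective (append_cancel_right hpal)
    have ht₂s : t₂ <:+ s := suffix_of_suffix_length_le (suffix_append t₁ t₂) hs.suffix
      (hs.length_le t₂ (suffix_append _ _) ht₂)
    rw [hpt, length_append, length_append]
    exact Nat.add_le_add_right (ht₂s.flatMap φ).length_le _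

lemma IsPretWithMarker.infix_dropLast_applyM_append (h : IsPretWithMarker φ w) {s v : List A}
    (hs : s <:+: v) (a : A) : applyM φ s ++ w <:+: (applyM φ (v ++ [a]) ++ w).dropLast := by
  obtain ⟨x, y, rfl⟩ := hs
  set r := (applyM φ (y ++ [a]).reverse).reverse
  have hr : r ≠ [] := by simp [r, h.ne_nil a]
  have hsplit : applyM φ (x ++ s ++ y ++ [a]) ++ w = applyM φ x ++ (applyM φ s ++ w) ++ r := by
    rw [append_assoc (x ++ s) y [a], applyM_append, append_assoc, h.applyM_append_eq (y ++ [a]),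
      applyM_append]
    simp only [append_assoc, r]
  refine ⟨applyM φ x, r.dropLast, ?_⟩
  rw [hsplit, dropLast_append_of_ne_nil hr]

end MarkedImages

theorem pret_marked_rich_preimage_general {A : Type*} [DecidableEq A]
    (φ : A → List A) (w : List A) (h : IsPretWithMarker φ w)
    (u : ℕ → A)
    (hrich : RichInf (applyInf φ u)) : RichInf u := by
  rw [richInf_iff_not_infix_longestPalSuffix] at hrich ⊢
  intro n s hs hocc
  set Q := applyM φ (factorAt u 0 (n + 1)) ++ w
  have hQpos : 0 < Q.length := by
    have := length_le_length_applyM φ h.ne_nil (factorAt u 0 (n + 1))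
    simp only [Q, length_append, factorAt_length] at this ⊢
    omega
  obtain ⟨m, hm⟩ := Nat.exists_eq_add_one_of_ne_zero hQpos.ne'
  have hQ : factorAt (applyInf φ u) 0 (m + 1) = Q := hm ▸ h.factorAt_applyInf u (n + 1)
  have hQm : factorAt (applyInf φ u) 0 m = Q.dropLast := by
    rw [← hQ, factorAt_succ, dropLast_concat]
  refine hrich m _ (by rw [hQ]; exact h.isLongestPalSuffix_applyM_append hs) ?_
  rw [hQm]
  simp only [Q, factorAt_succ]
  exact h.infix_dropLast_applyM_append hocc _

/-- If `φ` is a marked morphism in Class `P_ret`, the language of `u`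
is closed under reversal, and `φ(u)` is rich, then `u` is rich. -/
theorem pret_marked_rich_preimage {A : Type*} [Fintype A] [DecidableEq A]
    (φ : A → List A) (w : List A) (h : IsPretWithMarker φ w) (hm : Marked φ)
    (u : ℕ → A) (hcl : ClosedUnderReversal u)
    (hrich : RichInf (applyInf φ u)) : RichInf u :=
  pret_marked_rich_preimage_general φ w h u hrich
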